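/- arXiv:0709.2008 — 3 statements merged into one kernel-verified Lean document; each statement's English description precedes it below -/
import Mathlib

section
/- With the hypotheses of the previous recursion (G_{α+1_i} = ∂_i G_α + G_α G_i, G_0 = I, norms bounded by M = max_i max(|∂_i|, ‖G_i‖)), the normalized matrices G_{[α]} = G_α / α! satisfy ‖G_{[α]}‖^{1/|α|} ≤ M / |p|^{(|α| − S_p(|α|))/((p−1)|α|)}, and consequently liminf_{|α|→∞} ‖G_{[α]}‖^{−1/|α|} ≥ |p|^{1/(p−1)} / M > 0. -/
private lemma stmt11_G_bound {k B : Type*} [NontriviallyNormedField k]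
    [NormedRing B] [NormOneClass B] [IsUltrametricDist B] [NormedAlgebra k B]
    {d μ : ℕ} (D : Fin d → B →L[k] B)
    (G : (Fin d → ℕ) → Matrix (Fin μ) (Fin μ) B)
    (hG0 : G 0 = 1)
    (hrec : ∀ (α : Fin d → ℕ) (i : Fin d),
      G (α + Pi.single i 1) = (G α).map (D i) + G α * G (Pi.single i 1))
    (M : ℝ) (hM0 : 0 ≤ M) (hMD : ∀ i, ‖D i‖ ≤ M)
    (hMG : ∀ i a b, ‖G (Pi.single i 1) a b‖ ≤ M) :
    ∀ (n : ℕ) (α : Fin d → ℕ), ∑ i, α i = n → ∀ a b, ‖G α a b‖ ≤ M ^ n := by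
  intro n
  induction n with
  | zero =>
    intro α hα a b
    have hα0 : α = 0 := by
      funext i
      exact (Finset.sum_eq_zero_iff.mp hα) i (Finset.mem_univ i)
    subst hα0
    rw [hG0, pow_zero]
    by_cases hab : a = b
    · simp [Matrix.one_apply, hab]
    · simp [Matrix.one_apply, hab]
  | succ n ih =>
    intro α hα a b
    have hi : ∃ i, α i ≠ 0 := by
      by_contra h
      push_neg at h
      simp [h] at hα
    obtain ⟨i, hi⟩ := hi
    set β : Fin d → ℕ := α - Pi.single i 1 with hβdef
    have hβ : β + Pi.single i 1 = α := by
      funext j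
      by_cases hj : j = i
      · subst hj
        simp only [hβdef, Pi.add_apply, Pi.sub_apply, Pi.single_eq_same]
        exact Nat.succ_pred_eq_of_pos (Nat.pos_of_ne_zero hi)
      · simp [hβdef, Pi.single_eq_of_ne hj]
    have hβsum : ∑ j, β j = n := by
      have h1 := congrArg (fun f : Fin d → ℕ => ∑ j, f j) hβ
      simp only [Pi.add_apply, Finset.sum_add_distrib, Finset.sum_pi_single, hα] at h1
      simp at h1
      omega
    have hGα : G α = (G β).map (D i) + G β * G (Pi.single i 1) := by
      rw [← hβ]; exact hrec β i
    rw [hGα]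
    rw [Matrix.add_apply]
    refine (IsUltrametricDist.norm_add_le_max _ _).trans (max_le ?_ ?_)
    · rw [Matrix.map_apply]
      calc ‖D i (G β a b)‖ ≤ ‖D i‖ * ‖G β a b‖ := (D i).le_opNorm _
        _ ≤ M * M ^ n := mul_le_mul (hMD i) (ih β hβsum a b) (norm_nonneg _) hM0
        _ = M ^ (n + 1) := by ring
    · rw [Matrix.mul_apply]
      refine IsUltrametricDist.norm_sum_le_of_forall_le_of_nonneg (pow_nonneg hM0 _) ?_
      intro c _
      calc ‖G β a c * G (Pi.single i 1) c b‖ ≤ ‖G β a c‖ * ‖G (Pi.single i 1) c b‖ :=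
            norm_mul_le _ _
        _ ≤ M ^ n * M := mul_le_mul (ih β hβsum a c) (hMG i c b) (norm_nonneg _)
            (pow_nonneg hM0 _)
        _ = M ^ (n + 1) := by ring

set_option maxHeartbeats 1000000 in
/-- Trivial estimate, normalized form: with the hypotheses of the recursion
`G (α + 1ᵢ) = ∂ᵢ(G α) + G α * G (1ᵢ)`, `G 0 = 1`, norms bounded by `M`, the normalized
matrices `H α = G α / α!` (i.e. `G α = (α! : k) • H α`) satisfy
`‖H α‖^{1/|α|} ≤ M / |p|^{(|α| - S_p(|α|))/((p-1)|α|)}`, and consequently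
`liminf ‖H α‖^{-1/|α|} ≥ |p|^{1/(p-1)} / M > 0`. -/
theorem stmt_11 {k B : Type*} [NontriviallyNormedField k] [IsUltrametricDist k]
    [NormedRing B] [NormOneClass B] [IsUltrametricDist B] [NormedAlgebra k B]
    [CompleteSpace B]
    (p : ℕ) (hp : p.Prime)
    (hpk0 : 0 < ‖((p : ℕ) : k)‖) (hpk1 : ‖((p : ℕ) : k)‖ < 1)
    (hval : ∀ m : ℕ, 0 < m → ‖((m : ℕ) : k)‖ = ‖((p : ℕ) : k)‖ ^ padicValNat p m)
    {d μ : ℕ} (D : Fin d → B →L[k] B)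
    (hder : ∀ i (x y : B), D i (x * y) = D i x * y + x * D i y)
    (hcomm : ∀ i j (x : B), D i (D j x) = D j (D i x))
    (G H : (Fin d → ℕ) → Matrix (Fin μ) (Fin μ) B)
    (hG0 : G 0 = 1)
    (hrec : ∀ (α : Fin d → ℕ) (i : Fin d),
      G (α + Pi.single i 1) = (G α).map (D i) + G α * G (Pi.single i 1))
    (hH : ∀ α : Fin d → ℕ, G α = (((∏ i, Nat.factorial (α i)) : ℕ) : k) • H α)
    (M : ℝ) (hM0 : 0 < M) (hMD : ∀ i, ‖D i‖ ≤ M)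
    (hMG : ∀ i a b, ‖G (Pi.single i 1) a b‖ ≤ M) :
    (∀ (α : Fin d → ℕ) (a b : Fin μ), 0 < ∑ i, α i →
      ‖H α a b‖ ^ ((∑ i, α i : ℝ)⁻¹) ≤
        M / ‖((p : ℕ) : k)‖ ^
          ((((∑ i, α i : ℕ) : ℝ) - ((Nat.digits p (∑ i, α i)).sum : ℝ)) /
            (((p : ℝ) - 1) * (∑ i, α i)))) ∧
    (∀ ε : ℝ, 0 < ε → ∃ N : ℕ, ∀ (α : Fin d → ℕ), N ≤ ∑ i, α i →
      ∀ a b : Fin μ, ‖H α a b‖ ≠ 0 →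
        ‖((p : ℕ) : k)‖ ^ ((1 : ℝ) / ((p : ℝ) - 1)) / M - ε ≤
          ‖H α a b‖ ^ (-(∑ i, α i : ℝ)⁻¹)) ∧
    0 < ‖((p : ℕ) : k)‖ ^ ((1 : ℝ) / ((p : ℝ) - 1)) / M := by
  have hfp : Fact p.Prime := ⟨hp⟩
  set q : ℝ := ‖((p : ℕ) : k)‖ with hqdef
  have hM0' : (0:ℝ) ≤ M := hM0.le
  have hp1R : (1:ℝ) < (p:ℝ) := by exact_mod_cast hp.one_lt
  have hpm1 : (0:ℝ) < (p:ℝ) - 1 := by linarith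
  have hGb := stmt11_G_bound D G hG0 hrec M hM0' hMD hMG
  -- entry bound for H
  have key : ∀ (α : Fin d → ℕ) (a b : Fin μ),
      ‖H α a b‖ ≤ M ^ (∑ i, α i) / q ^ (padicValNat p (Nat.factorial (∑ i, α i))) := by
    intro α a b
    set n := ∑ i, α i with hndef
    set c := ∏ i, Nat.factorial (α i) with hcdef
    have hc0 : 0 < c := Finset.prod_pos (fun i _ => Nat.factorial_pos _)
    have hdvd : c ∣ n.factorial := Nat.prod_factorial_dvd_factorial_sum _ _
    have hvc : padicValNat p c ≤ padicValNat p n.factorial := by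
      rw [← Nat.factorization_def _ hp, ← Nat.factorization_def _ hp]
      exact (Nat.factorization_le_iff_dvd hc0.ne' (Nat.factorial_ne_zero n)).mpr hdvd p
    have hnorm : ‖G α a b‖ = q ^ (padicValNat p c) * ‖H α a b‖ := by
      rw [hH α]
      simp only [Matrix.smul_apply]
      rw [norm_smul, hval c hc0]
    have h1 : q ^ padicValNat p c * ‖H α a b‖ ≤ M ^ n := by
      rw [← hnorm]; exact hGb n α rfl a b
    have hqp : (0:ℝ) < q ^ padicValNat p c := pow_pos hpk0 _
    have h2 : ‖H α a b‖ ≤ M ^ n / q ^ padicValNat p c := by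
      rw [le_div_iff₀ hqp]; nlinarith [h1]
    refine h2.trans ?_
    exact div_le_div_of_nonneg_left (pow_nonneg hM0' n) (pow_pos hpk0 _)
      (pow_le_pow_of_le_one hpk0.le hpk1.le hvc)
  -- part 1
  have part1 : ∀ (α : Fin d → ℕ) (a b : Fin μ), 0 < ∑ i, α i →
      ‖H α a b‖ ^ ((∑ i, α i : ℝ)⁻¹) ≤
        M / q ^
          ((((∑ i, α i : ℕ) : ℝ) - ((Nat.digits p (∑ i, α i)).sum : ℝ)) /
            (((p : ℝ) - 1) * (∑ i, α i))) := by
    intro α a b hn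
    rw [show (∑ i, (α i : ℝ)) = ((∑ i, α i : ℕ) : ℝ) from (Nat.cast_sum _ _).symm]
    set n := ∑ i, α i with hndef
    set v := padicValNat p n.factorial with hvdef
    set S := (Nat.digits p n).sum with hSdef
    have hnR : (0:ℝ) < (n:ℝ) := by exact_mod_cast hn
    have hleg : ((p:ℝ) - 1) * (v:ℝ) = (n:ℝ) - (S:ℝ) := by
      have h := sub_one_mul_padicValNat_factorial (p := p) n
      have hS : S ≤ n := Nat.digit_sum_le p n
      have h2 : (((p - 1) * padicValNat p n.factorial : ℕ) : ℝ) = ((n - S : ℕ) : ℝ) := by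
        exact_mod_cast congrArg (Nat.cast : ℕ → ℝ) h
      rw [Nat.cast_mul, Nat.cast_sub hp.one_le, Nat.cast_sub hS, Nat.cast_one] at h2
      exact h2
    have hE : ((n:ℝ) - (S:ℝ)) / (((p:ℝ)-1) * (n:ℝ)) = (v:ℝ) / (n:ℝ) := by
      rw [← hleg, mul_div_mul_left _ _ (ne_of_gt hpm1)]
    have hrhs : (M ^ n / q ^ v) ^ ((n:ℝ))⁻¹ = M / q ^ ((v:ℝ)/(n:ℝ)) := by
      rw [← Real.rpow_natCast M n, ← Real.rpow_natCast q v,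
        Real.div_rpow (Real.rpow_nonneg hM0' _) (Real.rpow_nonneg hpk0.le _),
        ← Real.rpow_mul hM0', ← Real.rpow_mul hpk0.le,
        mul_inv_cancel₀ (ne_of_gt hnR), Real.rpow_one, ← div_eq_mul_inv]
    calc ‖H α a b‖ ^ ((n:ℝ))⁻¹ ≤ (M ^ n / q ^ v) ^ ((n:ℝ))⁻¹ :=
          Real.rpow_le_rpow (norm_nonneg _) (key α a b) (by positivity)
      _ = M / q ^ ((v:ℝ)/(n:ℝ)) := hrhs
      _ = M / q ^ (((n:ℝ) - (S:ℝ)) / (((p:ℝ)-1) * (n:ℝ))) := by rw [hE]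
  refine ⟨part1, ?_, div_pos (Real.rpow_pos_of_pos hpk0 _) hM0⟩
  intro ε hε
  refine ⟨1, fun α hα a b hne => ?_⟩
  have hn : 0 < ∑ i, α i := hα
  have h1 := part1 α a b hn
  rw [show (∑ i, (α i : ℝ)) = ((∑ i, α i : ℕ) : ℝ) from (Nat.cast_sum _ _).symm] at h1 ⊢
  set n := ∑ i, α i with hndef
  set S := (Nat.digits p n).sum with hSdef
  have hnR : (0:ℝ) < (n:ℝ) := by exact_mod_cast hn
  set E := (((n:ℕ):ℝ) - (S:ℝ)) / (((p:ℝ)-1) * (n:ℝ)) with hEdef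
  have hS0 : (0:ℝ) ≤ (S:ℝ) := Nat.cast_nonneg _
  have hEle : E ≤ 1/((p:ℝ)-1) := by
    rw [hEdef, div_le_div_iff₀ (by positivity) hpm1]
    nlinarith
  have hqE : q ^ ((1:ℝ)/((p:ℝ)-1)) ≤ q ^ E :=
    Real.rpow_le_rpow_of_exponent_ge hpk0 hpk1.le hEle
  have hxpos : 0 < ‖H α a b‖ := (norm_nonneg _).lt_of_ne (Ne.symm hne)
  have hx1 : 0 < ‖H α a b‖ ^ ((n:ℝ))⁻¹ := Real.rpow_pos_of_pos hxpos _
  have h2 : q ^ E / M ≤ (‖H α a b‖ ^ ((n:ℝ))⁻¹)⁻¹ := by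
    have h3 := inv_anti₀ hx1 h1
    rwa [inv_div] at h3
  rw [Real.rpow_neg (norm_nonneg _)]
  have h4 : q ^ ((1:ℝ)/((p:ℝ)-1)) / M ≤ q ^ E / M := by gcongr
  linarith
end

section
/- Let f = Σ_α a_α x^α converge at ξ ∈ k^d with μ = (v(ξ_1), …, v(ξ_d)) ∈ Conv(f), and suppose μ ∈ Reg(f), i.e. the infimum defining v(f, μ) is attained at a unique multi-index β. Then f(ξ) ≠ 0 and v(f(ξ)) = v(f, μ) = v(a_β) + Σ_i β_i v(ξ_i). -/
/-!
By the ultrametric inequality, a convergent sum whose terms all have norm `< r` has norm `< r`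
(a finite partial sum does, and the tail is arbitrarily small). Applied to the series with the
dominant term `t_β = a_β ξ^β` removed, this gives `‖f(ξ) - t_β‖ < ‖t_β‖`, hence
`‖f(ξ)‖ = ‖t_β‖ > 0`.
-/

section Ultrametric

variable {ι M : Type*}

theorem HasSum.norm_lt_of_forall_norm_lt [SeminormedAddCommGroup M] [IsUltrametricDist M]
    [Nonempty ι] {f : ι → M} {s : M} {r : ℝ}
    (hf : HasSum f s) (h : ∀ i, ‖f i‖ < r) : ‖s‖ < r := by
  have hr : 0 < r := (norm_nonneg _).trans_lt (h (Classical.arbitrary ι))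
  obtain ⟨t, ht⟩ := (hf.eventually (Metric.ball_mem_nhds s hr)).exists
  have htail : ‖s - ∑ i ∈ t, f i‖ < r := by rwa [dist_comm, dist_eq_norm] at ht
  have hpartial : ‖∑ i ∈ t, f i‖ < r := by
    obtain ⟨i, -, hi⟩ := IsUltrametricDist.exists_norm_finsetSum_le t f
    exact hi.trans_lt (h i)
  calc ‖s‖ = ‖(s - ∑ i ∈ t, f i) + ∑ i ∈ t, f i‖ := by rw [sub_add_cancel]
    _ ≤ max ‖s - ∑ i ∈ t, f i‖ ‖∑ i ∈ t, f i‖ := IsUltrametricDist.norm_add_le_max _ _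
    _ < r := max_lt htail hpartial

theorem HasSum.norm_eq_of_forall_ne_norm_lt [NormedAddCommGroup M] [IsUltrametricDist M]
    {f : ι → M} {s : M} (hf : HasSum f s) (j : ι)
    (h : ∀ i, i ≠ j → ‖f i‖ < ‖f j‖) : ‖s‖ = ‖f j‖ := by
  classical
  have : Nonempty ι := ⟨j⟩
  by_cases hj : ‖f j‖ = 0
  · rw [(hasSum_single j fun i hij => absurd (h i hij) (by simp [hj])).unique hf]
  · have hrest : HasSum (Function.update f j 0) (s - f j) := by
      simpa [sub_eq_neg_add] using hf.update j 0
    have hlt : ‖s - f j‖ < ‖f j‖ := by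
      refine hrest.norm_lt_of_forall_norm_lt fun i => ?_
      rcases eq_or_ne i j with rfl | hij
      · simpa using (norm_nonneg _).lt_of_ne' hj
      · simpa [hij] using h i hij
    rw [← sub_add_cancel s (f j), add_comm]
    exact IsUltrametricDist.norm_add_eq_max_of_norm_ne_norm hlt.ne' |>.trans (max_eq_left hlt.le)

end Ultrametric

theorem stmt_14_general {k : Type*} [NontriviallyNormedField k]
    [IsUltrametricDist k] {d : ℕ}
    (a : (Fin d → ℕ) → k) (ξ : Fin d → k) (hξ : ∀ i, ξ i ≠ 0) (S : k)
    (hsum : HasSum (fun α : Fin d → ℕ => a α * ∏ i, ξ i ^ α i) S)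
    (β : Fin d → ℕ) (hβ : a β ≠ 0)
    (huniq : ∀ α : Fin d → ℕ, α ≠ β → a α ≠ 0 →
      ‖a α‖ * ∏ i, ‖ξ i‖ ^ α i < ‖a β‖ * ∏ i, ‖ξ i‖ ^ β i) :
    S ≠ 0 ∧ ‖S‖ = ‖a β‖ * ∏ i, ‖ξ i‖ ^ β i := by
  have hnorm : ∀ α, ‖a α * ∏ i, ξ i ^ α i‖ = ‖a α‖ * ∏ i, ‖ξ i‖ ^ α i := fun α => by
    rw [norm_mul, norm_prod]; simp only [norm_pow]
  have hpos : 0 < ‖a β‖ * ∏ i, ‖ξ i‖ ^ β i :=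
    mul_pos (norm_pos_iff.2 hβ) (Finset.prod_pos fun i _ => pow_pos (norm_pos_iff.2 (hξ i)) _)
  have hdom : ∀ α, α ≠ β → ‖a α * ∏ i, ξ i ^ α i‖ < ‖a β * ∏ i, ξ i ^ β i‖ := fun α hαβ => by
    rw [hnorm, hnorm]
    by_cases ha : a α = 0
    · simpa [ha] using hpos
    · exact huniq α hαβ ha
  have hS : ‖S‖ = ‖a β‖ * ∏ i, ‖ξ i‖ ^ β i :=
    (hsum.norm_eq_of_forall_ne_norm_lt β hdom).trans (hnorm β)
  exact ⟨norm_pos_iff.1 (hS ▸ hpos), hS⟩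

/-- If the power series `f = Σ a_α x^α` converges at `ξ ∈ k^d` (all `ξ i ≠ 0`) and the
infimum defining `v(f, μ)` at `μ = (v(ξ₁),…,v(ξ_d))` is attained at a unique
multi-index `β` (i.e. every other nonzero term is strictly dominated), then
`f(ξ) ≠ 0` and `‖f(ξ)‖ = ‖a_β‖ ∏ᵢ ‖ξᵢ‖^{βᵢ}`, that is,
`v(f(ξ)) = v(a_β) + Σᵢ βᵢ v(ξᵢ)`. -/
theorem stmt_14 {k : Type*} [NontriviallyNormedField k] [CompleteSpace k]
    [IsUltrametricDist k] {d : ℕ}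
    (a : (Fin d → ℕ) → k) (ξ : Fin d → k) (hξ : ∀ i, ξ i ≠ 0) (S : k)
    (hsum : HasSum (fun α : Fin d → ℕ => a α * ∏ i, ξ i ^ α i) S)
    (β : Fin d → ℕ) (hβ : a β ≠ 0)
    (huniq : ∀ α : Fin d → ℕ, α ≠ β → a α ≠ 0 →
      ‖a α‖ * ∏ i, ‖ξ i‖ ^ α i < ‖a β‖ * ∏ i, ‖ξ i‖ ^ β i) :
    S ≠ 0 ∧ ‖S‖ = ‖a β‖ * ∏ i, ‖ξ i‖ ^ β i :=
  stmt_14_general a ξ hξ S hsum β hβ huniq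
end

section
/- Let f = Σ_α a_α x^α over a complete algebraically closed nonarchimedean field k, and let ξ ∈ k^d with μ = (v(ξ_1),…,v(ξ_d)) ∈ Conv(f). If |f(ξ)| < |f(0)| (i.e. |f(ξ)| < |a_0|), then μ ∉ Reg(f); that is, the infimum v(f, μ) is attained at at least two distinct multi-indices. -/
/-- Over a complete algebraically closed nonarchimedean field, if `f = Σ a_α x^α`
converges at `ξ` (all `ξ i ≠ 0`) with sum `S` and `‖S‖ < ‖a 0‖ = ‖f(0)‖`, then `μ`
is not in `Reg(f)`: the supremum of the term values `‖a_α‖ ∏ ‖ξᵢ‖^{αᵢ}` is attained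
at (at least) two distinct multi-indices. -/
theorem stmt_15 {k : Type*} [NontriviallyNormedField k] [CompleteSpace k]
    [IsUltrametricDist k] [IsAlgClosed k] {d : ℕ}
    (a : (Fin d → ℕ) → k) (ξ : Fin d → k) (hξ : ∀ i, ξ i ≠ 0) (S : k)
    (hsum : HasSum (fun α : Fin d → ℕ => a α * ∏ i, ξ i ^ α i) S)
    (h0 : a 0 ≠ 0) (hlt : ‖S‖ < ‖a 0‖) :
    ∃ β γ : Fin d → ℕ, β ≠ γ ∧ a β ≠ 0 ∧ a γ ≠ 0 ∧
      ‖a β‖ * ∏ i, ‖ξ i‖ ^ β i = ‖a γ‖ * ∏ i, ‖ξ i‖ ^ γ i ∧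
      ∀ α : Fin d → ℕ, a α ≠ 0 →
        ‖a α‖ * ∏ i, ‖ξ i‖ ^ α i ≤ ‖a β‖ * ∏ i, ‖ξ i‖ ^ β i := by
  classical
  set f : (Fin d → ℕ) → k := fun α => a α * ∏ i, ξ i ^ α i with hf
  have hnorm : ∀ α, ‖f α‖ = ‖a α‖ * ∏ i, ‖ξ i‖ ^ α i := by
    intro α
    simp [hf, norm_prod]
  have hf0 : ‖f 0‖ = ‖a 0‖ := by simp [hf]
  have ha0pos : (0:ℝ) < ‖a 0‖ := norm_pos_iff.mpr h0
  -- terms tend to zero along cofinite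
  have hten : Filter.Tendsto (fun α => ‖f α‖) Filter.cofinite (nhds 0) :=
    by simpa using hsum.summable.tendsto_cofinite_zero.norm
  have hfin : ∀ c : ℝ, 0 < c → {α : Fin d → ℕ | c ≤ ‖f α‖}.Finite := by
    intro c hc
    have h1 : ∀ᶠ α in Filter.cofinite, ‖f α‖ < c := hten.eventually_lt_const hc
    simpa [Filter.eventually_cofinite, not_lt] using h1
  obtain ⟨F, hF⟩ := (hfin ‖a 0‖ ha0pos).exists_finset_coe
  have h0F : (0 : Fin d → ℕ) ∈ F := by
    rw [← Finset.mem_coe, hF]; simp [hf0]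
  -- pick global maximizer β
  obtain ⟨β, hβF, hβmax⟩ := F.exists_max_image (fun α => ‖f α‖) ⟨0, h0F⟩
  have hβ0 : ‖a 0‖ ≤ ‖f β‖ := hf0 ▸ hβmax 0 h0F
  have hβglob : ∀ α, ‖f α‖ ≤ ‖f β‖ := by
    intro α
    by_cases hα : α ∈ F
    · exact hβmax α hα
    · have : ¬ ‖a 0‖ ≤ ‖f α‖ := by
        rw [← Finset.mem_coe, hF] at hα; simpa using hα
      exact (not_le.mp this).le.trans hβ0
  have haβ : a β ≠ 0 := by
    intro h
    have hz : f β = 0 := by simp [hf, h]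
    rw [hz, norm_zero] at hβ0
    linarith
  have hfβpos : (0:ℝ) < ‖f β‖ := lt_of_lt_of_le ha0pos hβ0
  -- claim: another maximizer exists
  by_contra hcon
  push_neg at hcon
  have huniq : ∀ γ, γ ≠ β → ‖f γ‖ < ‖f β‖ := by
    intro γ hγ
    by_cases haγ : a γ = 0
    · rw [show f γ = 0 by simp [hf, haγ], norm_zero]; exact hfβpos
    · rcases lt_or_eq_of_le (hβglob γ) with h | h
      · exact h
      · exfalso
        obtain ⟨α, hα, hgt⟩ := hcon β γ (Ne.symm hγ) haβ haγ
          (by rw [← hnorm, ← hnorm, h])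
        rw [← hnorm, ← hnorm] at hgt
        exact absurd (hβglob α) (not_le.mpr hgt)
  -- second finite set with threshold ‖f β‖ / 2
  have hc1 : (0:ℝ) < ‖f β‖ / 2 := by linarith
  obtain ⟨F1, hF1⟩ := (hfin (‖f β‖ / 2) hc1).exists_finset_coe
  set T : Finset ℝ := insert (‖f β‖ / 2) ((F1.erase β).image (fun α => ‖f α‖)) with hT
  have hTne : T.Nonempty := ⟨_, Finset.mem_insert_self _ _⟩
  set b : ℝ := T.max' hTne with hb
  have hbmem := T.max'_mem hTne
  have hblt : b < ‖f β‖ := by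
    rw [hb]
    rcases Finset.mem_insert.mp hbmem with h | h
    · rw [h]; linarith
    · obtain ⟨α, hαmem, hαeq⟩ := Finset.mem_image.mp h
      rw [← hαeq]
      exact huniq α (Finset.ne_of_mem_erase hαmem)
  have hbge : ∀ α, α ≠ β → ‖f α‖ ≤ b := by
    intro α hα
    by_cases hmem : α ∈ F1
    · exact Finset.le_max' T _ (Finset.mem_insert_of_mem
        (Finset.mem_image_of_mem _ (Finset.mem_erase.mpr ⟨hα, hmem⟩)))
    · have : ¬ (‖f β‖ / 2 ≤ ‖f α‖) := by
        rw [← Finset.mem_coe, hF1] at hmem; simpa using hmem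
      exact (not_le.mp this).le.trans (Finset.le_max' T _ (Finset.mem_insert_self _ _))
  have hbnonneg : (0:ℝ) ≤ b := le_of_lt (lt_of_lt_of_le hc1
    (Finset.le_max' T _ (Finset.mem_insert_self _ _)))
  -- the sum with β-term removed
  have hg : HasSum (Function.update f β 0) (0 - f β + S) := hsum.update β 0
  have hgnorm : ‖S - f β‖ ≤ b := by
    have : (0 : k) - f β + S = S - f β := by ring
    rw [this] at hg
    rw [← hg.tsum_eq]
    refine IsUltrametricDist.norm_tsum_le_of_forall_le_of_nonneg hbnonneg ?_
    intro α
    by_cases hα : α = β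
    · subst hα; simp [hbnonneg]
    · rw [Function.update_of_ne hα]; exact hbge α hα
  -- isosceles: ‖f β‖ ≤ ‖S‖
  have : ‖f β‖ ≤ max ‖S‖ ‖f β - S‖ := by
    have := IsUltrametricDist.norm_add_le_max S (f β - S)
    simpa using this
  have hfs : ‖f β - S‖ ≤ b := by rw [← norm_neg]; simpa using hgnorm
  have : ‖f β‖ ≤ ‖S‖ := by
    rcases max_cases ‖S‖ ‖f β - S‖ with ⟨he, _⟩ | ⟨he, _⟩
    · rw [he] at this; exact this
    · rw [he] at this; linarith [hfs.trans_lt hblt |>.trans_le this]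
  linarith [hlt.trans_le hβ0]
end
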